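/- arXiv:2109.05690 — 2 statements merged into one kernel-verified Lean document; each statement's English description precedes it below -/
import Mathlib

section
/- Function value convergence at the averaged iterate of iBPG: under the standing assumptions, if (1/k)Σ_{i=0}^{k-1} η_i(‖x̃^{i+1}‖+1) → 0, (1/k)Σ_{i=0}^{k-1} μ_i → 0 and (1/k)Σ_{i=0}^{k-1} ν_i → 0, then F( (1/k)Σ_{i=0}^{k-1} x̃^{i+1} ) → F* as k → ∞, where F* := inf{F(x) : x ∈ Q} > −∞. -/
open Filter Topology RealInnerProductSpace

/-- The Bregman distance associated with the kernel `φ` whose gradient map is `gφ`. -/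
noncomputable def breg {E : Type*} [NormedAddCommGroup E] [InnerProductSpace ℝ E]
    (φ : E → ℝ) (gφ : E → E) (x y : E) : ℝ :=
  φ x - φ y - ⟪gφ y, x - y⟫

/-- The ν-subdifferential of `P` (a proper function with effective domain `domP`) at `x`. -/
def nuSubdiff {E : Type*} [NormedAddCommGroup E] [InnerProductSpace ℝ E]
    (P : E → ℝ) (domP : Set E) (ν : ℝ) (x : E) : Set E :=
  {d : E | ∀ u ∈ domP, P x + ⟪d, u - x⟫ - ν ≤ P u}

open Classical in
/-- Extension of a real-valued function with effective domain `dom` to an `EReal`-valued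
function taking the value `⊤` outside `dom`. -/
noncomputable def extFun {E : Type*} (g : E → ℝ) (dom : Set E) : E → EReal :=
  fun x => if x ∈ dom then (g x : EReal) else ⊤

/-- `φ` (with effective domain `domφ` and gradient map `gφ`) is essentially smooth. -/
def EssentiallySmooth {E : Type*} [NormedAddCommGroup E] [InnerProductSpace ℝ E]
    [FiniteDimensional ℝ E] (φ : E → ℝ) (domφ : Set E) (gφ : E → E) : Prop :=
  (interior domφ).Nonempty ∧
  (∀ x ∈ interior domφ, HasGradientAt φ (gφ x) x) ∧
  ∀ (u : ℕ → E) (u₀ : E), (∀ n, u n ∈ interior domφ) →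
    Tendsto u atTop (𝓝 u₀) → u₀ ∈ frontier (interior domφ) →
    Tendsto (fun n => ‖gφ (u n)‖) atTop atTop

/-- The standing assumptions (Assumption A) for the problem `inf {P x + f x : x ∈ Q}`. -/
structure Standing {E : Type*} [NormedAddCommGroup E] [InnerProductSpace ℝ E]
    [FiniteDimensional ℝ E] (Q domφ domP domf X : Set E)
    (φ P f : E → ℝ) (gφ gf : E → E) (L : ℝ) : Prop where
  hQclosed : IsClosed Q
  hQconv : Convex ℝ Q
  hQint : (interior Q).Nonempty
  hφconv : ConvexOn ℝ domφ φ
  hφstrict : StrictConvexOn ℝ (interior domφ) φ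
  hφsmooth : EssentiallySmooth φ domφ gφ
  hφQ : closure domφ = Q
  hPne : domP.Nonempty
  hPconv : ConvexOn ℝ domP P
  hPclosed : LowerSemicontinuous (extFun P domP)
  hPQ : (domP ∩ interior Q).Nonempty
  hfconv : ConvexOn ℝ domf f
  hfclosed : LowerSemicontinuous (extFun f domf)
  hfdom : domφ ⊆ domf
  hfgrad : ∀ x ∈ interior domφ, HasGradientAt f (gf x) x
  hXclosed : IsClosed X
  hXconv : Convex ℝ X
  hXsup : domP ∩ domφ ⊆ X
  hLnn : 0 ≤ L
  hrel : ∀ u ∈ interior domφ ∩ X, ∀ v ∈ domφ ∩ X,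
    f v ≤ f u + ⟪gf u, v - u⟫ + L * breg φ gφ v u

/-- The iBPG iterates with inexactness tolerance sequences `η`, `μ`, `ν`. -/
structure IBPGIter {E : Type*} [NormedAddCommGroup E] [InnerProductSpace ℝ E]
    [FiniteDimensional ℝ E] (domφ domP X : Set E) (φ P : E → ℝ) (gφ gf : E → E) (L : ℝ)
    (η μ ν : ℕ → ℝ) (x xt : ℕ → E) : Prop where
  hη : ∀ k, 0 ≤ η k
  hμ : ∀ k, 0 ≤ μ k
  hν : ∀ k, 0 ≤ ν k
  hx : ∀ k, x k ∈ X ∩ interior domφ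
  hxt : ∀ k, xt k ∈ domP ∩ domφ
  hinex : ∀ k, ∃ d ∈ nuSubdiff P domP (ν k) (xt (k+1)),
    ‖d + gf (x k) + L • (gφ (x (k+1)) - gφ (x k))‖ ≤ η k
  hdist : ∀ k, breg φ gφ (xt (k+1)) (x (k+1)) ≤ μ k

/-!
Each inexact step satisfies a descent inequality against every `u ∈ domP ∩ domφ`:
`F(x̃^{k+1}) ≤ F(u) + L (D(u, x^k) − D(u, x^{k+1})) + (‖u‖ + 1) η_k (‖x̃^{k+1}‖ + 1) + L μ_k + ν_k`,
from the `ν_k`-subgradient inequality for `P`, relative smoothness and convexity of `f`, and the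
four-point identity of the Bregman distance. Summing telescopes the Bregman terms, and Jensen's
inequality turns the bound into `F(average) ≤ F(u) + o(1)`. The averaged iterate lies in
`domP ∩ domφ`, over which the infimum of `F` is still `F*`: moving a point of `Q` slightly towards
a point of `domP ∩ int Q` lands in `domP ∩ int domφ` at arbitrarily small cost in `F`.
-/

open Finset

lemma ConvexOn.add_inner_le_of_hasGradientAt {E : Type*} [NormedAddCommGroup E]
    [InnerProductSpace ℝ E] [CompleteSpace E] {s : Set E} {g : E → ℝ} (hg : ConvexOn ℝ s g)
    {x u G : E} (hx : x ∈ s) (hu : u ∈ s) (hG : HasGradientAt g G x) :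
    g x + ⟪G, u - x⟫ ≤ g u := by
  let ℓ : ℝ →ᵃ[ℝ] E := AffineMap.lineMap x u
  have hline : HasDerivAt (g ∘ ℓ) ⟪G, u - x⟫ 0 := by
    simpa using hG.hasFDerivAt.comp_hasDerivAt_of_eq (0 : ℝ) AffineMap.hasDerivAt_lineMap
      (by simp)
  have := (hg.comp_affineMap ℓ).le_slope_of_hasDerivWithinAt (x := 0) (y := 1)
    (by simpa [ℓ] using hx) (by simpa [ℓ] using hu) one_pos hline.hasDerivWithinAt
  simp only [slope_def_field, Function.comp_apply, AffineMap.lineMap_apply_one,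
    AffineMap.lineMap_apply_zero, sub_zero, div_one, ℓ] at this
  linarith

lemma ConvexOn.eventually_lt_segment {E : Type*} [AddCommGroup E] [Module ℝ E]
    {C : Set E} {F : E → ℝ} (hF : ConvexOn ℝ C F) {w v : E} (hw : w ∈ C) (hv : v ∈ C)
    {ε : ℝ} (hε : 0 < ε) :
    ∀ᶠ t in 𝓝[>] (0 : ℝ), F (t • w + (1 - t) • v) < F v + ε := by
  have hlim : Tendsto (fun t : ℝ => F v + t * (F w - F v)) (𝓝[>] 0) (𝓝 (F v)) := by
    simpa using ((continuous_id.mul continuous_const).const_add (F v)).tendsto' 0 _ (by simp)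
      |>.mono_left nhdsWithin_le_nhds
  filter_upwards [hlim.eventually (gt_mem_nhds (lt_add_of_pos_right _ hε)),
    Ioo_mem_nhdsGT one_pos] with t hlt ht
  calc F (t • w + (1 - t) • v) ≤ t • F w + (1 - t) • F v :=
        hF.2 hw hv ht.1.le (by linarith [ht.2]) (by ring)
    _ = F v + t * (F w - F v) := by simp only [smul_eq_mul]; ring
    _ < F v + ε := hlt

lemma ConvexOn.map_finset_average_le {ι E : Type*} [AddCommGroup E] [Module ℝ E]
    {C : Set E} {F : E → ℝ} (hF : ConvexOn ℝ C F) {s : Finset ι} (hs : s.Nonempty)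
    {p : ι → E} (hp : ∀ i ∈ s, p i ∈ C) :
    F ((#s : ℝ)⁻¹ • ∑ i ∈ s, p i) ≤ (#s : ℝ)⁻¹ * ∑ i ∈ s, F (p i) := by
  have hw : ∑ _i ∈ s, (#s : ℝ)⁻¹ = 1 := by simp [hs.card_ne_zero]
  simpa [← Finset.smul_sum, ← Finset.mul_sum] using
    hF.map_sum_le (fun _ _ => by positivity) hw hp

lemma Convex.finset_average_mem {ι E : Type*} [AddCommGroup E] [Module ℝ E]
    {C : Set E} (hC : Convex ℝ C) {s : Finset ι} (hs : s.Nonempty)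
    {p : ι → E} (hp : ∀ i ∈ s, p i ∈ C) :
    (#s : ℝ)⁻¹ • ∑ i ∈ s, p i ∈ C := by
  have hw : ∑ _i ∈ s, (#s : ℝ)⁻¹ = 1 := by simp [hs.card_ne_zero]
  simpa [← Finset.smul_sum] using hC.sum_mem (fun _ _ => by positivity) hw hp

lemma neg_le_inner_sub_of_norm_le {E : Type*} [NormedAddCommGroup E] [InnerProductSpace ℝ E]
    {a u z : E} {η : ℝ} (ha : ‖a‖ ≤ η) :
    -((‖u‖ + 1) * (η * (‖z‖ + 1))) ≤ ⟪a, u - z⟫ := by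
  have hη : 0 ≤ η := (norm_nonneg a).trans ha
  have hCS : -(‖a‖ * ‖u - z‖) ≤ ⟪a, u - z⟫ :=
    neg_le_of_abs_le (abs_real_inner_le_norm a (u - z))
  have hsub : ‖a‖ * ‖u - z‖ ≤ η * (‖u‖ + ‖z‖) :=
    mul_le_mul ha (norm_sub_le u z) (norm_nonneg _) hη
  nlinarith [mul_nonneg hη (mul_nonneg (norm_nonneg u) (norm_nonneg z))]

lemma tendsto_of_le_of_forall_le_add_tendsto_zero {ι : Type*} {l : Filter ι} {a : ι → ℝ}
    {c : ℝ} (hlow : ∀ᶠ k in l, c ≤ a k)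
    (hup : ∀ ε > 0, ∃ b : ι → ℝ, Tendsto b l (𝓝 0) ∧ ∀ᶠ k in l, a k ≤ c + ε + b k) :
    Tendsto a l (𝓝 c) := by
  refine tendsto_order.2 ⟨fun c' hc' => hlow.mono fun k hk => hc'.trans_le hk, fun c' hc' => ?_⟩
  obtain ⟨b, hb, hab⟩ := hup ((c' - c) / 2) (by linarith)
  filter_upwards [hab, hb.eventually (gt_mem_nhds (show (0 : ℝ) < (c' - c) / 2 by linarith))]
    with k hk hbk
  linarith

section Bregman

variable {E : Type*} [NormedAddCommGroup E] [InnerProductSpace ℝ E] (φ : E → ℝ) (gφ : E → E)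

lemma breg_nonneg [CompleteSpace E] {s : Set E} (hφ : ConvexOn ℝ s φ) {v y : E} (hv : v ∈ s)
    (hy : y ∈ s) (hgrad : HasGradientAt φ (gφ y) y) : 0 ≤ breg φ gφ v y := by
  have := hφ.add_inner_le_of_hasGradientAt hy hv hgrad
  simp only [breg]
  linarith

lemma inner_sub_eq_breg_four_point (a b u c : E) :
    ⟪gφ b - gφ a, u - c⟫ =
      breg φ gφ u a - breg φ gφ u b - breg φ gφ c a + breg φ gφ c b := by
  simp only [breg, inner_sub_left, inner_sub_right]
  ring

end Bregman

section Iteration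

variable {E : Type*} [NormedAddCommGroup E] [InnerProductSpace ℝ E] [FiniteDimensional ℝ E]
  {Q domφ domP domf X : Set E} {φ P f : E → ℝ} {gφ gf : E → E} {L : ℝ}

namespace Standing

lemma interior_eq (hS : Standing Q domφ domP domf X φ P f gφ gf L) :
    interior Q = interior domφ := by
  rw [← hS.hφQ]
  exact hS.hφconv.1.interior_closure_eq_interior_of_nonempty_interior hS.hφsmooth.1

lemma convexOn_add (hS : Standing Q domφ domP domf X φ P f gφ gf L) :
    ConvexOn ℝ (domP ∩ domf) (P + f) :=
  have hC := hS.hPconv.1.inter hS.hfconv.1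
  (hS.hPconv.subset Set.inter_subset_left hC).add (hS.hfconv.subset Set.inter_subset_right hC)

lemma isGLB_inter_dom (hS : Standing Q domφ domP domf X φ P f gφ gf L) {Fstar : ℝ}
    (hFstar : IsGLB ((P + f) '' (domP ∩ domf ∩ Q)) Fstar) :
    IsGLB ((P + f) '' (domP ∩ domφ)) Fstar := by
  have hsub : domP ∩ domφ ⊆ domP ∩ domf ∩ Q := fun u hu =>
    ⟨⟨hu.1, hS.hfdom hu.2⟩, hS.hφQ ▸ subset_closure hu.2⟩
  refine ⟨lowerBounds_mono_set (Set.image_mono hsub) hFstar.1, fun b hb => hFstar.2 ?_⟩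
  rintro _ ⟨v, hv, rfl⟩
  obtain ⟨w, hwP, hwQ⟩ := hS.hPQ
  have hw : w ∈ interior domφ := hS.interior_eq ▸ hwQ
  refine le_of_forall_pos_lt_add fun ε hε => ?_
  obtain ⟨t, hlt, ht⟩ := ((hS.convexOn_add.eventually_lt_segment
    ⟨hwP, hS.hfdom (interior_subset hw)⟩ hv.1 hε).and (Ioo_mem_nhdsGT one_pos)).exists
  have hu : t • w + (1 - t) • v ∈ domP ∩ domφ :=
    ⟨hS.hPconv.1 hwP hv.1.1 ht.1.le (by linarith [ht.2]) (by ring),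
      interior_subset (hS.hφconv.1.combo_interior_closure_mem_interior hw
        (hS.hφQ ▸ hv.2) ht.1 (by linarith [ht.2]) (by ring))⟩
  exact (hb ⟨_, hu, rfl⟩).trans_lt hlt

end Standing

namespace IBPGIter

variable {η μ ν : ℕ → ℝ} {x xt : ℕ → E}

lemma value_le_one_step (hS : Standing Q domφ domP domf X φ P f gφ gf L)
    (hI : IBPGIter domφ domP X φ P gφ gf L η μ ν x xt) {u : E} (hu : u ∈ domP ∩ domφ)
    (k : ℕ) :
    (P + f) (xt (k + 1)) ≤ (P + f) u + L * (breg φ gφ u (x k) - breg φ gφ u (x (k + 1)))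
      + ((‖u‖ + 1) * (η k * (‖xt (k + 1)‖ + 1)) + L * μ k + ν k) := by
  obtain ⟨d, hd, hΔ⟩ := hI.hinex k
  obtain ⟨hxX, hxint⟩ := hI.hx k
  have hsubgrad : P (xt (k + 1)) + ⟪d, u - xt (k + 1)⟫ - ν k ≤ P u := hd u hu.1
  have hconv : f (x k) + ⟪gf (x k), u - x k⟫ ≤ f u :=
    hS.hfconv.add_inner_le_of_hasGradientAt (hS.hfdom (interior_subset hxint)) (hS.hfdom hu.2)
      (hS.hfgrad _ hxint)
  have hsmooth := hS.hrel (x k) ⟨hxint, hxX⟩ (xt (k + 1))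
    ⟨(hI.hxt (k + 1)).2, hS.hXsup (hI.hxt (k + 1))⟩
  have hinexact := neg_le_inner_sub_of_norm_le (u := u) (z := xt (k + 1)) hΔ
  rw [inner_add_left, inner_add_left, real_inner_smul_left,
    inner_sub_eq_breg_four_point] at hinexact
  have hsplit : ⟪gf (x k), u - xt (k + 1)⟫
      = ⟪gf (x k), u - x k⟫ - ⟪gf (x k), xt (k + 1) - x k⟫ := by
    rw [← inner_sub_right, sub_sub_sub_cancel_right]
  have hdist := mul_le_mul_of_nonneg_left (hI.hdist k) hS.hLnn
  simp only [Pi.add_apply]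
  linarith

lemma sum_value_le (hS : Standing Q domφ domP domf X φ P f gφ gf L)
    (hI : IBPGIter domφ domP X φ P gφ gf L η μ ν x xt) {u : E} (hu : u ∈ domP ∩ domφ)
    (k : ℕ) :
    ∑ i ∈ range k, (P + f) (xt (i + 1)) ≤ k * (P + f) u + L * breg φ gφ u (x 0)
      + ((‖u‖ + 1) * ∑ i ∈ range k, η i * (‖xt (i + 1)‖ + 1) + L * ∑ i ∈ range k, μ i
        + ∑ i ∈ range k, ν i) := by
  have hsteps := sum_le_sum fun i (_ : i ∈ range k) => hI.value_le_one_step hS hu i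
  simp only [sum_add_distrib, sum_const, card_range, nsmul_eq_mul, ← mul_sum,
    sum_range_sub' (fun i => breg φ gφ u (x i))] at hsteps
  have hlast : 0 ≤ L * breg φ gφ u (x k) := mul_nonneg hS.hLnn <| breg_nonneg φ gφ hS.hφconv
    hu.2 (interior_subset (hI.hx k).2) (hS.hφsmooth.2.1 _ (hI.hx k).2)
  linarith

lemma average_mem (hS : Standing Q domφ domP domf X φ P f gφ gf L)
    (hI : IBPGIter domφ domP X φ P gφ gf L η μ ν x xt) {k : ℕ} (hk : k ≠ 0) :
    (k : ℝ)⁻¹ • ∑ i ∈ range k, xt (i + 1) ∈ domP ∩ domφ := by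
  simpa using (hS.hPconv.1.inter hS.hφconv.1).finset_average_mem (nonempty_range_iff.2 hk)
    fun i _ => hI.hxt (i + 1)

lemma value_average_le (hS : Standing Q domφ domP domf X φ P f gφ gf L)
    (hI : IBPGIter domφ domP X φ P gφ gf L η μ ν x xt) {u : E} (hu : u ∈ domP ∩ domφ)
    {k : ℕ} (hk : k ≠ 0) :
    (P + f) ((k : ℝ)⁻¹ • ∑ i ∈ range k, xt (i + 1)) ≤ (P + f) u +
      ((k : ℝ)⁻¹ * (L * breg φ gφ u (x 0))
        + (‖u‖ + 1) * ((k : ℝ)⁻¹ * ∑ i ∈ range k, η i * (‖xt (i + 1)‖ + 1))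
        + L * ((k : ℝ)⁻¹ * ∑ i ∈ range k, μ i) + (k : ℝ)⁻¹ * ∑ i ∈ range k, ν i) := by
  have hjensen := hS.convexOn_add.map_finset_average_le (nonempty_range_iff.2 hk)
    (p := fun i => xt (i + 1)) fun i _ => ⟨(hI.hxt (i + 1)).1, hS.hfdom (hI.hxt (i + 1)).2⟩
  rw [card_range] at hjensen
  have hsum := mul_le_mul_of_nonneg_left (hI.sum_value_le hS hu k) (inv_nonneg.2 k.cast_nonneg)
  refine hjensen.trans (hsum.trans_eq ?_)
  field_simp
  ring

end IBPGIter

end Iteration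

/-- **Function value convergence at the averaged iterate of iBPG** (Theorem 3.1(ii)). Under the
standing assumptions, if `(1/k) Σ_{i<k} η_i (‖x̃^{i+1}‖+1) → 0`, `(1/k) Σ_{i<k} μ_i → 0` and
`(1/k) Σ_{i<k} ν_i → 0`, then `F((1/k) Σ_{i<k} x̃^{i+1}) → F*`, where `F = P + f` and
`F* = inf {F x : x ∈ Q} > −∞`. -/
theorem iBPG_averaged_value_convergence
    {E : Type*} [NormedAddCommGroup E] [InnerProductSpace ℝ E] [FiniteDimensional ℝ E]
    (Q domφ domP domf X : Set E) (φ P f : E → ℝ) (gφ gf : E → E) (L : ℝ)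
    (hstand : Standing Q domφ domP domf X φ P f gφ gf L)
    (η μ ν : ℕ → ℝ) (x xt : ℕ → E)
    (hiter : IBPGIter domφ domP X φ P gφ gf L η μ ν x xt)
    (Fstar : ℝ) (hFstar : IsGLB ((fun u => P u + f u) '' (domP ∩ domf ∩ Q)) Fstar)
    (h1 : Tendsto (fun k : ℕ => (k : ℝ)⁻¹ * ∑ i ∈ Finset.range k, η i * (‖xt (i+1)‖ + 1))
            atTop (𝓝 0))
    (h2 : Tendsto (fun k : ℕ => (k : ℝ)⁻¹ * ∑ i ∈ Finset.range k, μ i) atTop (𝓝 0))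
    (h3 : Tendsto (fun k : ℕ => (k : ℝ)⁻¹ * ∑ i ∈ Finset.range k, ν i) atTop (𝓝 0)) :
    Tendsto (fun k : ℕ =>
        P ((k : ℝ)⁻¹ • ∑ i ∈ Finset.range k, xt (i+1))
          + f ((k : ℝ)⁻¹ • ∑ i ∈ Finset.range k, xt (i+1)))
      atTop (𝓝 Fstar) := by
  have hGLB := hstand.isGLB_inter_dom hFstar
  refine tendsto_of_le_of_forall_le_add_tendsto_zero ?_ fun ε hε => ?_
  · filter_upwards [eventually_ne_atTop 0] with k hk
    exact hGLB.1 ⟨_, hiter.average_mem hstand hk, rfl⟩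
  obtain ⟨_, ⟨u, hu, rfl⟩, -, hlt⟩ := hGLB.exists_between (lt_add_of_pos_right Fstar hε)
  have hinv : Tendsto (fun k : ℕ => (k : ℝ)⁻¹) atTop (𝓝 0) :=
    tendsto_inv_atTop_zero.comp tendsto_natCast_atTop_atTop
  refine ⟨_, by simpa using (((hinv.mul_const (L * breg φ gφ u (x 0))).add
    (h1.const_mul (‖u‖ + 1))).add (h2.const_mul L)).add h3, ?_⟩
  filter_upwards [eventually_ne_atTop 0] with k hk
  have := hiter.value_average_le hstand hu hk
  simp only [Pi.add_apply] at this hlt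
  linarith
end

section
/- Subsequential convergence of iBPG: under the standing assumptions, suppose Σ_k η_k < ∞, Σ_k μ_k < ∞, Σ_k ν_k < ∞, the sequence {x̃^k} is bounded, and the set of minimizers of F over Q is nonempty. Then every cluster point of {x̃^k} is an optimal solution of the problem inf{F(x) : x ∈ Q}. -/
open Filter Topology RealInnerProductSpace

/-!
For every `u ∈ dom P ∩ dom φ`, one iBPG step gives
`F (x̃ᵏ⁺¹) ≤ F u + L D_φ(u, xᵏ) - L D_φ(u, xᵏ⁺¹) + εₖ` with summable errors `εₖ` (boundedness of
`x̃` controls the `ηₖ`-term). Telescoping yields `F (x̃ᵏ) ≤ F u + ε` infinitely often, and the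
same inequality with `u = x̃ᵏ` shows that `F (x̃ᵏ)` is nonincreasing up to summable errors, so the
bound holds eventually. Lower semicontinuity of `P + f` passes it to every cluster point `z`, and
moving along a segment from an interior point of `dom φ` extends `F z ≤ F u` from
`dom P ∩ dom φ` to every `u ∈ dom P ∩ dom f ∩ Q`.
-/
section InnerProductSpace

variable {E : Type*} [NormedAddCommGroup E] [InnerProductSpace ℝ E]

theorem ConvexOn.add_inner_gradient_le [CompleteSpace E] {s : Set E} {g : E → ℝ}
    (hg : ConvexOn ℝ s g) {x u G : E} (hx : x ∈ s) (hu : u ∈ s) (hG : HasGradientAt g G x) :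
    g x + ⟪G, u - x⟫ ≤ g u := by
  set ℓ := AffineMap.lineMap (k := ℝ) x u
  have hconv : ConvexOn ℝ (Set.Icc 0 1) (g ∘ ℓ) :=
    (hg.comp_affineMap ℓ).subset (fun t ht => hg.1.lineMap_mem hx hu ht) (convex_Icc 0 1)
  have hderiv : HasDerivAt (g ∘ ℓ) ⟪G, u - x⟫ 0 := by
    have := (AffineMap.lineMap_apply_zero (k := ℝ) x u ▸ hG.hasFDerivAt).comp_hasDerivAt (0 : ℝ)
      (AffineMap.hasDerivAt_lineMap (a := x) (b := u))
    simpa using this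
  have := hconv.le_slope_of_hasDerivAt (by simp) (by simp) zero_lt_one hderiv
  simp only [slope_def_field, Function.comp_apply, AffineMap.lineMap_apply_one,
    AffineMap.lineMap_apply_zero, sub_zero, div_one, ℓ] at this
  linarith

theorem breg_four_point (φ : E → ℝ) (gφ : E → E) (u a b c : E) :
    ⟪gφ a - gφ b, u - c⟫ =
      breg φ gφ u b - breg φ gφ u a + breg φ gφ c a - breg φ gφ c b := by
  simp only [breg, inner_sub_left, inner_sub_right, real_inner_comm]
  ring

end InnerProductSpace

section RealSequences

theorem frequently_le_add_of_le_telescoping {a b σ : ℕ → ℝ} {c : ℝ} (hb : ∀ k, 0 ≤ b k)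
    (hσ₀ : ∀ k, 0 ≤ σ k) (hσ : Summable σ) (h : ∀ k, a k ≤ c + b k - b (k + 1) + σ k)
    {ε : ℝ} (hε : 0 < ε) : ∃ᶠ k in atTop, a k ≤ c + ε := by
  rw [Filter.frequently_atTop]
  intro K
  by_contra! hgt
  set S := ∑' i, σ (i + K)
  have hdrop : ∀ m : ℕ, b (K + m) - b K ≤ S - m * ε := by
    intro m
    calc b (K + m) - b K = ∑ i ∈ Finset.range m, (b (K + i + 1) - b (K + i)) :=
          (Finset.sum_range_sub (fun i => b (K + i)) m).symm
      _ ≤ ∑ i ∈ Finset.range m, (σ (K + i) - ε) :=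
          Finset.sum_le_sum fun i _ => by linarith [h (K + i), hgt (K + i) (Nat.le_add_right K i)]
      _ ≤ S - m * ε := by
          rw [Finset.sum_sub_distrib, Finset.sum_const, Finset.card_range, nsmul_eq_mul]
          gcongr
          simpa only [add_comm K] using
            ((summable_nat_add_iff K).2 hσ).sum_le_tsum (Finset.range m) (fun i _ => hσ₀ _)
  obtain ⟨m, hm⟩ := exists_nat_gt ((b K + S) / ε)
  rw [div_lt_iff₀ hε] at hm
  linarith [hdrop m, hb (K + m)]

theorem eventually_le_add_of_frequently_le_add {a δ : ℕ → ℝ} {c : ℝ} (hδ₀ : ∀ k, 0 ≤ δ k)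
    (hδ : Summable δ) (hdec : ∀ k, a (k + 1) ≤ a k + δ k)
    (hfreq : ∀ ε > 0, ∃ᶠ k in atTop, a k ≤ c + ε) :
    ∀ ε > 0, ∀ᶠ k in atTop, a k ≤ c + ε := by
  intro ε hε
  set tail : ℕ → ℝ := fun k => ∑' i, δ (i + k)
  have htail₀ : ∀ k, 0 ≤ tail k := fun k => tsum_nonneg fun i => hδ₀ _
  have hanti : Antitone fun k => a k + tail k := by
    refine antitone_nat_of_succ_le fun k => ?_
    have : tail k = δ k + tail (k + 1) := by
      simp only [tail, ((summable_nat_add_iff k).2 hδ).tsum_eq_zero_add, zero_add]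
      exact congrArg _ (tsum_congr fun i => by ring_nf)
    linarith [hdec k]
  obtain ⟨K, haK, htailK⟩ := ((hfreq (ε / 2) (half_pos hε)).and_eventually
    ((tendsto_sum_nat_add δ).eventually (ge_mem_nhds (half_pos hε)))).exists
  filter_upwards [eventually_ge_atTop K] with k hk
  linarith [hanti hk, htail₀ k]

end RealSequences

section Semicontinuity

variable {α : Type*}

theorem LowerSemicontinuous.le_of_mapClusterPt [TopologicalSpace α] {γ : Type*} [LinearOrder γ]
    [TopologicalSpace γ] [ClosedIicTopology γ] {g : α → γ} (hg : LowerSemicontinuous g)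
    {ι : Type*} {l : Filter ι} {y : ι → α} {z : α} (hz : MapClusterPt z l y) {C : γ}
    (h : ∀ᶠ k in l, g (y k) ≤ C) : g z ≤ C :=
  (hg.isClosed_preimage C).closure_subset (hz.mem_closure_of_mem _ h)

theorem extFun_ne_bot (g : α → ℝ) (s : Set α) (x : α) : extFun g s x ≠ ⊥ := by
  unfold extFun; split_ifs <;> simp

theorem LowerSemicontinuous.extFun_add [TopologicalSpace α] {g h : α → ℝ} {s t : Set α}
    (hg : LowerSemicontinuous (extFun g s)) (hh : LowerSemicontinuous (extFun h t)) :
    LowerSemicontinuous fun x => extFun g s x + extFun h t x :=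
  hg.add' hh fun x =>
    EReal.continuousAt_add (Or.inr (extFun_ne_bot h t x)) (Or.inl (extFun_ne_bot g s x))

theorem extFun_add_extFun_le_coe_iff {g h : α → ℝ} {s t : Set α} {x : α} {C : ℝ} :
    extFun g s x + extFun h t x ≤ C ↔ x ∈ s ∧ x ∈ t ∧ g x + h x ≤ C := by
  unfold extFun
  split_ifs <;> simp [*, ← EReal.coe_add]

end Semicontinuity

section ConvexCombination

variable {E : Type*} [AddCommGroup E] [Module ℝ E]

theorem ConvexOn.le_of_forall_le_combo {s : Set E} {F : E → ℝ} (hF : ConvexOn ℝ s F)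
    {w u : E} (hw : w ∈ s) (hu : u ∈ s) {a : ℝ}
    (h : ∀ t ∈ Set.Ioo (0 : ℝ) 1, a ≤ F (t • w + (1 - t) • u)) : a ≤ F u := by
  have hlim : Tendsto (fun t : ℝ => t * F w + (1 - t) * F u) (𝓝[>] 0) (𝓝 (F u)) := by
    have := ((by fun_prop : Continuous fun t : ℝ => t * F w + (1 - t) * F u).tendsto 0)
    simpa using this.mono_left nhdsWithin_le_nhds
  refine ge_of_tendsto hlim ?_
  filter_upwards [Ioo_mem_nhdsGT zero_lt_one] with t ht
  exact (h t ht).trans (hF.2 hw hu ht.1.le (sub_nonneg.2 ht.2.le) (by ring))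

end ConvexCombination

section IBPG

variable {E : Type*} [NormedAddCommGroup E] [InnerProductSpace ℝ E] [FiniteDimensional ℝ E]
  {Q domφ domP domf X : Set E} {φ P f : E → ℝ} {gφ gf : E → E} {L : ℝ}

theorem Standing.exists_mem_interior (hs : Standing Q domφ domP domf X φ P f gφ gf L) :
    ∃ w ∈ domP, w ∈ interior domφ := by
  obtain ⟨w, hwP, hwQ⟩ := hs.hPQ
  refine ⟨w, hwP, ?_⟩
  rwa [← hs.hφQ, hs.hφconv.1.interior_closure_eq_interior_of_nonempty_interior hs.hφsmooth.1]
    at hwQ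

theorem Standing.le_objective_of_forall_le (hs : Standing Q domφ domP domf X φ P f gφ gf L)
    {a : ℝ} (h : ∀ v ∈ domP ∩ domφ, a ≤ P v + f v) :
    ∀ u ∈ domP ∩ domf ∩ Q, a ≤ P u + f u := by
  rintro u ⟨⟨huP, huf⟩, huQ⟩
  obtain ⟨w, hwP, hwφ⟩ := hs.exists_mem_interior
  have hconv : ConvexOn ℝ (domP ∩ domf) (P + f) :=
    (hs.hPconv.subset Set.inter_subset_left (hs.hPconv.1.inter hs.hfconv.1)).add
      (hs.hfconv.subset Set.inter_subset_right (hs.hPconv.1.inter hs.hfconv.1))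
  refine hconv.le_of_forall_le_combo ⟨hwP, hs.hfdom (interior_subset hwφ)⟩ ⟨huP, huf⟩
    fun t ht => h _ ⟨hs.hPconv.1 hwP huP ht.1.le (sub_nonneg.2 ht.2.le) (by ring), ?_⟩
  exact interior_subset <| hs.hφconv.1.combo_interior_closure_mem_interior hwφ
    (hs.hφQ ▸ huQ) ht.1 (sub_nonneg.2 ht.2.le) (by ring)

variable {η μ ν : ℕ → ℝ} {x xt : ℕ → E}

theorem IBPGIter.breg_nonneg (hs : Standing Q domφ domP domf X φ P f gφ gf L)
    (hi : IBPGIter domφ domP X φ P gφ gf L η μ ν x xt) {u : E} (hu : u ∈ domφ) (k : ℕ) :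
    0 ≤ breg φ gφ u (x k) := by
  have hxk := (hi.hx k).2
  have := hs.hφconv.add_inner_gradient_le (interior_subset hxk) hu (hs.hφsmooth.2.1 _ hxk)
  unfold breg
  linarith

theorem IBPGIter.objective_succ_le (hs : Standing Q domφ domP domf X φ P f gφ gf L)
    (hi : IBPGIter domφ domP X φ P gφ gf L η μ ν x xt) {u : E} (huP : u ∈ domP)
    (huf : u ∈ domf) (k : ℕ) :
    P (xt (k + 1)) + f (xt (k + 1)) ≤ P u + f u + L * breg φ gφ u (x k)
      - L * breg φ gφ u (x (k + 1)) + (L * μ k + ν k + η k * ‖xt (k + 1) - u‖) := by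
  obtain ⟨d, hd, hΔ⟩ := hi.hinex k
  set Δ := d + gf (x k) + L • (gφ (x (k + 1)) - gφ (x k))
  obtain ⟨hxX, hxφ⟩ := hi.hx k
  obtain ⟨hxtP, hxtφ⟩ := hi.hxt (k + 1)
  have hP := hd u huP
  have hf_upper := hs.hrel (x k) ⟨hxφ, hxX⟩ (xt (k + 1)) ⟨hxtφ, hs.hXsup ⟨hxtP, hxtφ⟩⟩
  have hf_lower := hs.hfconv.add_inner_gradient_le (hs.hfdom (interior_subset hxφ)) huf
    (hs.hfgrad _ hxφ)
  have hΔ_inner : ⟪Δ, xt (k + 1) - u⟫ ≤ η k * ‖xt (k + 1) - u‖ :=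
    (real_inner_le_norm _ _).trans (mul_le_mul_of_nonneg_right hΔ (norm_nonneg _))
  have hd_split : ⟪d, u - xt (k + 1)⟫ = -⟪Δ, xt (k + 1) - u⟫ - ⟪gf (x k), u - x k⟫
      + ⟪gf (x k), xt (k + 1) - x k⟫ - L * ⟪gφ (x (k + 1)) - gφ (x k), u - xt (k + 1)⟫ := by
    simp only [Δ, inner_add_left, inner_sub_left, inner_sub_right, real_inner_smul_left]
    ring
  have hthree := breg_four_point φ gφ u (x (k + 1)) (x k) (xt (k + 1))
  have hdist := mul_le_mul_of_nonneg_left (hi.hdist k) hs.hLnn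
  rw [hthree] at hd_split
  linarith

theorem IBPGIter.objective_succ_succ_le (hs : Standing Q domφ domP domf X φ P f gφ gf L)
    (hi : IBPGIter domφ domP X φ P gφ gf L η μ ν x xt) (k : ℕ) :
    P (xt (k + 1 + 1)) + f (xt (k + 1 + 1)) ≤ P (xt (k + 1)) + f (xt (k + 1))
      + (L * μ k + (L * μ (k + 1) + ν (k + 1) + η (k + 1) * ‖xt (k + 1 + 1) - xt (k + 1)‖)) := by
  obtain ⟨hxtP, hxtφ⟩ := hi.hxt (k + 1)
  have hstep := hi.objective_succ_le hs hxtP (hs.hfdom hxtφ) (k + 1)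
  have hdist := mul_le_mul_of_nonneg_left (hi.hdist k) hs.hLnn
  have hbreg := mul_nonneg hs.hLnn (hi.breg_nonneg hs hxtφ (k + 1 + 1))
  linarith

theorem IBPGIter.eventually_objective_le (hs : Standing Q domφ domP domf X φ P f gφ gf L)
    (hi : IBPGIter domφ domP X φ P gφ gf L η μ ν x xt) (hη : Summable η) (hμ : Summable μ)
    (hν : Summable ν) {R : ℝ} (hR : ∀ k, ‖xt k‖ ≤ R) {u : E} (huP : u ∈ domP) (huφ : u ∈ domφ)
    {ε : ℝ} (hε : 0 < ε) : ∀ᶠ k in atTop, P (xt k) + f (xt k) ≤ P u + f u + ε := by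
  have hR₀ : 0 ≤ R := (norm_nonneg _).trans (hR 0)
  have hdist : ∀ k v, ‖xt k - v‖ ≤ R + ‖v‖ := fun k v =>
    (norm_sub_le _ _).trans (by gcongr; exact hR k)
  have hL := hs.hLnn
  have hfreq (ε : ℝ) (hε : 0 < ε) :
      ∃ᶠ k in atTop, P (xt (k + 1)) + f (xt (k + 1)) ≤ P u + f u + ε := by
    refine frequently_le_add_of_le_telescoping (b := fun k => L * breg φ gφ u (x k))
      (σ := fun k => L * μ k + ν k + η k * (R + ‖u‖))
      (fun k => mul_nonneg hL (hi.breg_nonneg hs huφ k))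
      (fun k => by have := hi.hμ k; have := hi.hν k; have := hi.hη k; positivity)
      (((hμ.mul_left L).add hν).add (hη.mul_right _)) (fun k => ?_) hε
    have := hi.objective_succ_le hs huP (hs.hfdom huφ) k
    have := mul_le_mul_of_nonneg_left (hdist (k + 1) u) (hi.hη k)
    linarith
  have hev := eventually_le_add_of_frequently_le_add
    (δ := fun k => L * μ k + (L * μ (k + 1) + ν (k + 1) + η (k + 1) * (R + R)))
    (fun k => by have := hi.hμ k; have := hi.hμ (k + 1); have := hi.hν (k + 1);
                 have := hi.hη (k + 1); positivity)
    ((hμ.mul_left L).add ((((summable_nat_add_iff 1).2 hμ).mul_left L).add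
      ((summable_nat_add_iff 1).2 hν) |>.add (((summable_nat_add_iff 1).2 hη).mul_right _)))
    (fun k => ?_) hfreq ε hε
  · rw [← map_add_atTop_eq_nat 1]
    exact hev
  · have := hi.objective_succ_succ_le hs k
    have hgap : ‖xt (k + 1 + 1) - xt (k + 1)‖ ≤ R + R :=
      (hdist _ _).trans (by gcongr; exact hR _)
    have := mul_le_mul_of_nonneg_left hgap (hi.hη (k + 1))
    linarith

end IBPG

theorem iBPG_subsequential_convergence_general
    {E : Type*} [NormedAddCommGroup E] [InnerProductSpace ℝ E] [FiniteDimensional ℝ E]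
    (Q domφ domP domf X : Set E) (φ P f : E → ℝ) (gφ gf : E → E) (L : ℝ)
    (hstand : Standing Q domφ domP domf X φ P f gφ gf L)
    (η μ ν : ℕ → ℝ) (x xt : ℕ → E)
    (hiter : IBPGIter domφ domP X φ P gφ gf L η μ ν x xt)
    (h1 : Summable η) (h2 : Summable μ) (h3 : Summable ν)
    (hbdd : Bornology.IsBounded (Set.range xt)) :
    ∀ z : E, MapClusterPt z atTop xt →
      z ∈ domP ∩ domf ∩ Q ∧ ∀ u ∈ domP ∩ domf ∩ Q, P z + f z ≤ P u + f u := by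
  intro z hz
  obtain ⟨R, hR⟩ := isBounded_iff_forall_norm_le.1 hbdd
  have hzQ : z ∈ Q :=
    hstand.hφQ ▸ hz.mem_closure_of_mem _ (mem_map.2 (univ_mem' fun k => (hiter.hxt k).2))
  have hlsc := hstand.hPclosed.extFun_add hstand.hfclosed
  have hle (v : E) (hv : v ∈ domP ∩ domφ) (ε : ℝ) (hε : 0 < ε) :
      z ∈ domP ∧ z ∈ domf ∧ P z + f z ≤ P v + f v + ε := by
    refine extFun_add_extFun_le_coe_iff.1 (hlsc.le_of_mapClusterPt hz ?_)
    filter_upwards [hiter.eventually_objective_le hstand h1 h2 h3 (fun k => hR _ ⟨k, rfl⟩)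
      hv.1 hv.2 hε] with k hk
    exact extFun_add_extFun_le_coe_iff.2
      ⟨(hiter.hxt k).1, hstand.hfdom (hiter.hxt k).2, hk⟩
  obtain ⟨w, hwP, hwφ⟩ := hstand.exists_mem_interior
  obtain ⟨hzP, hzf, -⟩ := hle w ⟨hwP, interior_subset hwφ⟩ 1 one_pos
  exact ⟨⟨⟨hzP, hzf⟩, hzQ⟩, hstand.le_objective_of_forall_le fun v hv =>
    le_of_forall_pos_le_add fun ε hε => (hle v hv ε hε).2.2⟩

/-- **Subsequential convergence of iBPG** (Theorem 3.2(i)). Under the standing assumptions, if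
`Σ_k η_k < ∞`, `Σ_k μ_k < ∞`, `Σ_k ν_k < ∞`, the sequence `{x̃^k}` is bounded, and the set of
minimizers of `F = P + f` over `Q` is nonempty, then every cluster point of `{x̃^k}` is an
optimal solution of `inf {F x : x ∈ Q}`. -/
theorem iBPG_subsequential_convergence
    {E : Type*} [NormedAddCommGroup E] [InnerProductSpace ℝ E] [FiniteDimensional ℝ E]
    (Q domφ domP domf X : Set E) (φ P f : E → ℝ) (gφ gf : E → E) (L : ℝ)
    (hstand : Standing Q domφ domP domf X φ P f gφ gf L)
    (η μ ν : ℕ → ℝ) (x xt : ℕ → E)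
    (hiter : IBPGIter domφ domP X φ P gφ gf L η μ ν x xt)
    (h1 : Summable η) (h2 : Summable μ) (h3 : Summable ν)
    (hbdd : Bornology.IsBounded (Set.range xt))
    (hopt : ∃ xstar ∈ domP ∩ domf ∩ Q, ∀ u ∈ domP ∩ domf ∩ Q,
      P xstar + f xstar ≤ P u + f u) :
    ∀ z : E, MapClusterPt z atTop xt →
      z ∈ domP ∩ domf ∩ Q ∧ ∀ u ∈ domP ∩ domf ∩ Q, P z + f z ≤ P u + f u :=
  iBPG_subsequential_convergence_general Q domφ domP domf X φ P f gφ gf L hstand η μ ν x xt hiter h1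
    h2 h3 hbdd
end
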